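/- Averaged nonconvex rate extraction: if nonnegative sequences A_r, C_r and real B_r bounded below by B* satisfy A_r ≤ (4/(ηN))(B_r − B_{r+1}) + (16L²/N)C_r and C_r ≤ (1 − q/3)C_{r−1} + γ A_r with C_{−1} = C_0 = 0, and (16L²/N)·(3γ/q) ≤ 1/2, then (1/R)∑_{r=0}^{R−1} A_r ≤ 8(B_0 − B*)/(ηNR). -/

import Mathlib

/-!
Summing the recursion for `C` gives `(q/3) ∑ C ≤ γ ∑ A`, so under the step-size condition the
`C`-term of the descent inequality costs at most half of `∑ A`. Telescoping the `B`-differences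
then leaves `∑ A ≤ 8 (B₀ - B*) / (η N)`.
-/

open Finset

theorem sum_range_le_of_le_telescope (A B C : ℕ → ℝ) (a b : ℝ)
    (h : ∀ r, A r ≤ a * (B r - B (r + 1)) + b * C r) (R : ℕ) :
    ∑ r ∈ range R, A r ≤ a * (B 0 - B R) + b * ∑ r ∈ range R, C r := by
  calc ∑ r ∈ range R, A r ≤ ∑ r ∈ range R, (a * (B r - B (r + 1)) + b * C r) :=
        sum_le_sum fun r _ => h r
    _ = a * (B 0 - B R) + b * ∑ r ∈ range R, C r := by
        rw [sum_add_distrib, ← mul_sum, ← mul_sum, sum_range_sub']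

theorem one_sub_mul_sum_range_le_of_contraction (A C : ℕ → ℝ) (ρ γ : ℝ)
    (hρ : 0 ≤ ρ) (hγ : 0 ≤ γ) (hA : ∀ r, 0 ≤ A r) (hC : ∀ r, 0 ≤ C r) (hC0 : C 0 = 0)
    (hrec : ∀ r, C (r + 1) ≤ ρ * C r + γ * A (r + 1)) (R : ℕ) :
    (1 - ρ) * ∑ r ∈ range R, C r ≤ γ * ∑ r ∈ range R, A r := by
  cases R with
  | zero => simp
  | succ n =>
    have hshift : ∑ r ∈ range (n + 1), C r = ∑ r ∈ range n, C (r + 1) := by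
      rw [sum_range_succ', hC0, add_zero]
    have hCsum : ∑ r ∈ range n, C r ≤ ∑ r ∈ range (n + 1), C r := by
      rw [sum_range_succ]; linarith [hC n]
    have hAsum : ∑ r ∈ range n, A (r + 1) ≤ ∑ r ∈ range (n + 1), A r := by
      rw [sum_range_succ']; linarith [hA 0]
    have hstep : ∑ r ∈ range (n + 1), C r
        ≤ ρ * ∑ r ∈ range (n + 1), C r + γ * ∑ r ∈ range (n + 1), A r :=
      calc ∑ r ∈ range (n + 1), C r
          ≤ ∑ r ∈ range n, (ρ * C r + γ * A (r + 1)) := hshift ▸ sum_le_sum fun r _ => hrec r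
        _ = ρ * ∑ r ∈ range n, C r + γ * ∑ r ∈ range n, A (r + 1) := by
            rw [sum_add_distrib, mul_sum, mul_sum]
        _ ≤ _ := by gcongr
    linarith

theorem averaged_nonconvex_rate_general (A C : ℕ → ℝ) (B : ℕ → ℝ) (Bstar : ℝ)
    (η N L q γ : ℝ) (hη : 0 < η) (hN : 0 < N)
    (hq0 : 0 < q) (hq1 : q ≤ 1) (hγ : 0 < γ)
    (hcond : 96 * L ^ 2 * γ / (N * q) ≤ 1 / 2)
    (hA : ∀ r, 0 ≤ A r) (hC : ∀ r, 0 ≤ C r)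
    (hB : ∀ r, Bstar ≤ B r)
    (hC0 : C 0 = 0)
    (hArec : ∀ r, A r ≤ 4 / (η * N) * (B r - B (r + 1)) + 16 * L ^ 2 / N * C r)
    (hCrec : ∀ r, C (r + 1) ≤ (1 - q / 3) * C r + γ * A (r + 1))
    (R : ℕ) :
    (1 / (R : ℝ)) * ∑ r ∈ Finset.range R, A r ≤ 8 * (B 0 - Bstar) / (η * N * R) := by
  set SA := ∑ r ∈ range R, A r
  set SC := ∑ r ∈ range R, C r
  have hSA : 0 ≤ SA := sum_nonneg fun r _ => hA r
  have hdescent : SA ≤ 4 / (η * N) * (B 0 - B R) + 16 * L ^ 2 / N * SC :=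
    sum_range_le_of_le_telescope A B C _ _ hArec R
  have hcontract : q / 3 * SC ≤ γ * SA := by
    simpa using one_sub_mul_sum_range_le_of_contraction A C _ γ (by linarith) hγ.le hA hC hC0
      hCrec R
  have hcoupling : 16 * L ^ 2 / N * SC ≤ SA / 2 := by
    rw [div_le_iff₀ (by positivity)] at hcond
    have hscaled : q * (16 * L ^ 2 * SC) ≤ q * (N * SA / 4) := by
      linarith [mul_le_mul_of_nonneg_left hcontract (by positivity : 0 ≤ 48 * L ^ 2),
        mul_le_mul_of_nonneg_right hcond hSA]
    rw [div_mul_eq_mul_div, div_le_iff₀ hN]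
    linarith [le_of_mul_le_mul_left hscaled hq0, mul_nonneg hN.le hSA]
  have hbound : SA ≤ 8 / (η * N) * (B 0 - Bstar) := by
    have hgap := mul_le_mul_of_nonneg_left (sub_le_sub_left (hB R) (B 0))
      (by positivity : 0 ≤ 4 / (η * N))
    have htwice : 8 / (η * N) * (B 0 - Bstar) = 2 * (4 / (η * N) * (B 0 - Bstar)) := by ring
    linarith
  calc 1 / (R : ℝ) * SA ≤ 1 / R * (8 / (η * N) * (B 0 - Bstar)) := by gcongr
    _ = 8 * (B 0 - Bstar) / (η * N * R) := by field_simp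

/-- Averaged nonconvex rate extraction: if A_r ≤ (4/(ηN))(B_r − B_{r+1}) + (16L²/N)C_r
and C_{r+1} ≤ (1 − q/3)C_r + γA_{r+1} with C_0 = 0, B_r ≥ B*, A, C ≥ 0, and
96L²γ/(Nq) ≤ 1/2, then (1/R)∑_{r=0}^{R−1} A_r ≤ 8(B_0 − B*)/(ηNR). -/
theorem averaged_nonconvex_rate (A C : ℕ → ℝ) (B : ℕ → ℝ) (Bstar : ℝ)
    (η N L q γ : ℝ) (hη : 0 < η) (hN : 0 < N) (hL : 0 < L)
    (hq0 : 0 < q) (hq1 : q ≤ 1) (hγ : 0 < γ)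
    (hcond : 96 * L ^ 2 * γ / (N * q) ≤ 1 / 2)
    (hA : ∀ r, 0 ≤ A r) (hC : ∀ r, 0 ≤ C r)
    (hB : ∀ r, Bstar ≤ B r)
    (hC0 : C 0 = 0)
    (hArec : ∀ r, A r ≤ 4 / (η * N) * (B r - B (r + 1)) + 16 * L ^ 2 / N * C r)
    (hCrec : ∀ r, C (r + 1) ≤ (1 - q / 3) * C r + γ * A (r + 1))
    (R : ℕ) (hR : 0 < R) :
    (1 / (R : ℝ)) * ∑ r ∈ Finset.range R, A r ≤ 8 * (B 0 - Bstar) / (η * N * R) :=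
  averaged_nonconvex_rate_general A C B Bstar η N L q γ hη hN hq0 hq1 hγ hcond hA hC hB hC0 hArec
    hCrec R
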